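/- arXiv:1711.01612 — 2 statements merged into one kernel-verified Lean document; each statement's English description precedes it below -/
import Mathlib

section
/- Let T be a positive bounded operator on a complex Hilbert space H. Then T attains its minimum modulus if and only if m(T) is an eigenvalue of T. -/
open ContinuousLinearMap Filter Topology

noncomputable def mmod {H1 H2 : Type*} [NormedAddCommGroup H1] [InnerProductSpace ℂ H1]
    [NormedAddCommGroup H2] [InnerProductSpace ℂ H2] (T : H1 →L[ℂ] H2) : ℝ :=
  sInf ((fun x => ‖T x‖) '' {x : H1 | ‖x‖ = 1})

def MinAttains {H1 H2 : Type*} [NormedAddCommGroup H1] [InnerProductSpace ℂ H1]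
    [NormedAddCommGroup H2] [InnerProductSpace ℂ H2] (T : H1 →L[ℂ] H2) : Prop :=
  ∃ x : H1, ‖x‖ = 1 ∧ ‖T x‖ = mmod T

noncomputable def mmodOn {H1 H2 : Type*} [NormedAddCommGroup H1] [InnerProductSpace ℂ H1]
    [NormedAddCommGroup H2] [InnerProductSpace ℂ H2] (T : H1 →L[ℂ] H2)
    (M : Submodule ℂ H1) : ℝ :=
  sInf ((fun x => ‖T x‖) '' {x : H1 | x ∈ M ∧ ‖x‖ = 1})

def MinAttainsOn {H1 H2 : Type*} [NormedAddCommGroup H1] [InnerProductSpace ℂ H1]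
    [NormedAddCommGroup H2] [InnerProductSpace ℂ H2] (T : H1 →L[ℂ] H2)
    (M : Submodule ℂ H1) : Prop :=
  ∃ x : H1, x ∈ M ∧ ‖x‖ = 1 ∧ ‖T x‖ = mmodOn T M

def AbsMinAttains {H1 H2 : Type*} [NormedAddCommGroup H1] [InnerProductSpace ℂ H1]
    [NormedAddCommGroup H2] [InnerProductSpace ℂ H2] (T : H1 →L[ℂ] H2) : Prop :=
  ∀ M : Submodule ℂ H1, M ≠ ⊥ → IsClosed (M : Set H1) → MinAttainsOn T M

/-! Since `‖T x‖ ≥ m(T) ‖x‖`, the operator `T†T - m(T)²` is positive. A minimizing unit vector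
`x₀` is a zero of its quadratic form, hence lies in its kernel: `T² x₀ = m(T)² x₀`. For positive
`T` this square root can be taken, giving `T x₀ = m(T) x₀`. Conversely, a normalized eigenvector
for `m(T)` attains the minimum. -/

open scoped InnerProductSpace

namespace ContinuousLinearMap.IsPositive

variable {H : Type*} [NormedAddCommGroup H] [InnerProductSpace ℂ H]

-- `0 ≤ S` factors as `S = R† R`, so `⟪S x, x⟫ = ‖R x‖²`.
lemma apply_eq_zero_of_re_inner_eq_zero [CompleteSpace H] {S : H →L[ℂ] H} (hS : S.IsPositive)
    {x : H} (hx : RCLike.re ⟪S x, x⟫_ℂ = 0) : S x = 0 := by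
  obtain ⟨R, rfl⟩ := CStarAlgebra.nonneg_iff_eq_star_mul_self.mp ((nonneg_iff_isPositive S).mpr hS)
  have hR : R x = 0 := by
    rwa [star_eq_adjoint, mul_def, comp_apply, adjoint_inner_left, inner_self_eq_norm_sq,
      sq_eq_zero_iff, norm_eq_zero] at hx
  simp [hR]

lemma apply_eq_smul_of_apply_apply_eq_sq_smul {T : H →L[ℂ] H} (hT : T.IsPositive) {c : ℝ}
    (hc : 0 ≤ c) {x : H} (hx : T (T x) = ((c ^ 2 : ℝ) : ℂ) • x) : T x = (c : ℂ) • x := by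
  rcases hc.eq_or_lt with rfl | hc
  · have hTx : ⟪T x, T x⟫_ℂ = 0 := by
      rw [← hT.inner_left_eq_inner_right, hx]
      simp
    simpa using hTx
  · set y := T x - (c : ℂ) • x
    have hTy : T y = -((c : ℂ) • y) := by
      simp only [y, map_sub, map_smul, hx, smul_sub, smul_smul]
      push_cast
      module
    have hy : RCLike.re ⟪T y, y⟫_ℂ = -(c * ‖y‖ ^ 2) := by
      rw [hTy, inner_neg_left, inner_smul_left, inner_self_eq_norm_sq_to_K]
      simp [← Complex.ofReal_pow]
    have hy0 : c * ‖y‖ ^ 2 = 0 := by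
      linarith [hT.re_inner_nonneg_left y, mul_nonneg hc.le (sq_nonneg ‖y‖)]
    rwa [mul_eq_zero, or_iff_right hc.ne', sq_eq_zero_iff, norm_eq_zero, sub_eq_zero] at hy0

end ContinuousLinearMap.IsPositive

section MinimumModulus

variable {H₁ H₂ : Type*} [NormedAddCommGroup H₁] [InnerProductSpace ℂ H₁]
  [NormedAddCommGroup H₂] [InnerProductSpace ℂ H₂]

lemma mmod_nonneg (T : H₁ →L[ℂ] H₂) : 0 ≤ mmod T :=
  Real.sInf_nonneg (by rintro _ ⟨x, -, rfl⟩; exact norm_nonneg _)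

lemma mmod_le_norm_apply (T : H₁ →L[ℂ] H₂) {x : H₁} (hx : ‖x‖ = 1) : mmod T ≤ ‖T x‖ :=
  csInf_le ⟨0, by rintro _ ⟨x, -, rfl⟩; exact norm_nonneg _⟩ ⟨x, hx, rfl⟩

lemma mmod_mul_norm_le (T : H₁ →L[ℂ] H₂) (x : H₁) : mmod T * ‖x‖ ≤ ‖T x‖ := by
  rcases eq_or_ne x 0 with rfl | hx
  · simp
  have hnx : ‖x‖ ≠ 0 := norm_ne_zero_iff.mpr hx
  have h := mmod_le_norm_apply T (x := (‖x‖⁻¹ : ℂ) • x) (by simp [norm_smul, hnx])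
  rw [map_smul, norm_smul, norm_inv, Complex.norm_real, norm_norm] at h
  rwa [← le_div_iff₀ (norm_pos_iff.mpr hx), div_eq_inv_mul]

lemma minAttains_of_hasEigenvalue_mmod {T : H₁ →L[ℂ] H₁}
    (h : Module.End.HasEigenvalue (T : H₁ →ₗ[ℂ] H₁) (mmod T : ℂ)) : MinAttains T := by
  obtain ⟨x, hx⟩ := h.exists_hasEigenvector
  have hnx : ‖x‖ ≠ 0 := norm_ne_zero_iff.mpr hx.2
  refine ⟨(‖x‖⁻¹ : ℂ) • x, by simp [norm_smul, hnx], ?_⟩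
  have hTx : T x = (mmod T : ℂ) • x := hx.apply_eq_smul
  rw [map_smul, hTx, smul_comm, norm_smul, norm_smul]
  simp [hnx, abs_of_nonneg (mmod_nonneg T)]

variable [CompleteSpace H₁] [CompleteSpace H₂]

lemma inner_adjoint_comp_self_sub_smul_apply (T : H₁ →L[ℂ] H₂) (c : ℝ) (x : H₁) :
    ⟪(adjoint T ∘L T - (c : ℂ) • 1) x, x⟫_ℂ = ((‖T x‖ ^ 2 - c * ‖x‖ ^ 2 : ℝ) : ℂ) := by
  simp [adjoint_inner_left, inner_self_eq_norm_sq_to_K]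

lemma isPositive_adjoint_comp_self_sub_mmod_sq (T : H₁ →L[ℂ] H₂) :
    (adjoint T ∘L T - ((mmod T ^ 2 : ℝ) : ℂ) • 1).IsPositive := by
  refine isPositive_def'.mpr ⟨?_, fun x => ?_⟩
  · exact (isPositive_adjoint_comp_self T).isSelfAdjoint.sub
      (.smul (Complex.conj_ofReal _) (.one _))
  · rw [reApplyInnerSelf_apply, inner_adjoint_comp_self_sub_smul_apply, RCLike.re_to_complex,
      Complex.ofReal_re]
    nlinarith [mmod_mul_norm_le T x, mul_nonneg (mmod_nonneg T) (norm_nonneg x)]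

lemma adjoint_apply_apply_eq_of_norm_apply_eq_mmod_mul {T : H₁ →L[ℂ] H₂} {x : H₁}
    (hx : ‖T x‖ = mmod T * ‖x‖) : adjoint T (T x) = ((mmod T ^ 2 : ℝ) : ℂ) • x := by
  have h := (isPositive_adjoint_comp_self_sub_mmod_sq T).apply_eq_zero_of_re_inner_eq_zero
    (x := x) (by rw [inner_adjoint_comp_self_sub_smul_apply, hx, RCLike.re_to_complex,
      Complex.ofReal_re]; ring)
  rwa [sub_apply, sub_eq_zero] at h

end MinimumModulus

theorem stmt1 {H : Type*} [NormedAddCommGroup H] [InnerProductSpace ℂ H]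
    [CompleteSpace H] (T : H →L[ℂ] H) (hT : T.IsPositive) :
    MinAttains T ↔ Module.End.HasEigenvalue (T : H →ₗ[ℂ] H) ((mmod T : ℂ)) := by
  refine ⟨?_, minAttains_of_hasEigenvalue_mmod⟩
  rintro ⟨x, hx1, hxm⟩
  have hx0 : x ≠ 0 := by rintro rfl; simp at hx1
  have hTT := adjoint_apply_apply_eq_of_norm_apply_eq_mmod_mul (T := T) (x := x)
    (by rw [hxm, hx1, mul_one])
  rw [hT.isSelfAdjoint.adjoint_eq] at hTT
  refine Module.End.hasEigenvalue_of_hasEigenvector (Module.End.hasEigenvector_iff.mpr ⟨?_, hx0⟩)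
  exact Module.End.mem_eigenspace_iff.mpr
    (hT.apply_eq_smul_of_apply_apply_eq_sq_smul (mmod_nonneg T) hTT)
end

section
/- Let K be a positive compact operator and F a finite rank operator on a complex Hilbert space H. Then for every α ≥ ‖K‖/2, the operator αI - K + F is absolutely minimum attaining. -/
open ContinuousLinearMap Filter Topology

/-! Write `T = α - C` with `C = K - F` compact, and let `m` be the minimum modulus of `T` on `M`.
Along an ultrafilter, a minimizing sequence of unit vectors `u` of `M` converges weakly to some
`x ∈ M` with `‖x‖ ≤ 1`, and `C u → C x` in norm. Passing to the limit in
`‖T u‖² = α²‖u‖² - 2α Re⟪u, C u⟫ + ‖C u‖²` gives `m² = ‖T x‖² + α² (1 - ‖x‖²)`. As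
`‖T x‖ ≥ m ‖x‖`, either `‖x‖ = 1` and `m` is attained at `x`, or `|α| ≤ m`. In the second case an
infinite-dimensional `M` contains a unit vector `y ∈ ker F`, and `0 ≤ K ≤ 2α` gives
`‖T y‖ = ‖(α - K) y‖ ≤ α ≤ m`. A finite-dimensional `M` has a compact unit sphere. -/

open scoped InnerProductSpace

section WeakConvergence

variable (𝕜 : Type*) {E : Type*} [RCLike 𝕜] [NormedAddCommGroup E] [InnerProductSpace 𝕜 E]
  {ι : Type*}

def WeakTendsto (u : ι → E) (l : Filter ι) (x : E) : Prop :=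
  ∀ v : E, Tendsto (fun i => ⟪u i, v⟫_𝕜) l (𝓝 ⟪x, v⟫_𝕜)

variable {𝕜}

theorem exists_weakTendsto_of_norm_le [CompleteSpace E] (U : Ultrafilter ι) {u : ι → E} {R : ℝ}
    (hu : ∀ i, ‖u i‖ ≤ R) : ∃ x : E, ‖x‖ ≤ R ∧ WeakTendsto 𝕜 u U x := by
  let φ : ι → WeakDual 𝕜 E := fun i => StrongDual.toWeakDual (InnerProductSpace.toDual 𝕜 E (u i))
  have hφ : WeakDual.toStrongDual ⁻¹' Metric.closedBall 0 R ∈ U.map φ :=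
    Ultrafilter.mem_map.mpr (univ_mem' fun i => by simpa [φ] using hu i)
  obtain ⟨g, hg, hφg⟩ :=
    (WeakDual.isCompact_closedBall (0 : StrongDual 𝕜 E) R).ultrafilter_le_nhds' _ hφ
  refine ⟨(InnerProductSpace.toDual 𝕜 E).symm (WeakDual.toStrongDual g), by simpa using hg,
    fun v => ?_⟩
  simpa [φ, Function.comp_def] using ((WeakDual.eval_continuous v).tendsto g).comp hφg

variable {u : ι → E} {l : Filter ι} {x : E}

theorem WeakTendsto.mem_of_isClosed [CompleteSpace E] [l.NeBot] (h : WeakTendsto 𝕜 u l x)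
    {M : Submodule 𝕜 E} (hM : IsClosed (M : Set E)) (hu : ∀ᶠ i in l, u i ∈ M) : x ∈ M := by
  rw [← hM.submodule_topologicalClosure_eq, ← Submodule.orthogonal_orthogonal_eq_closure,
    Submodule.mem_orthogonal']
  intro v hv
  refine tendsto_nhds_unique (h v) (tendsto_const_nhds.congr' ?_)
  filter_upwards [hu] with i hi
  rw [← inner_conj_symm, (Submodule.mem_orthogonal' M v).mp hv (u i) hi, map_zero]

theorem WeakTendsto.map_eq_of_tendsto {F : Type*} [NormedAddCommGroup F] [InnerProductSpace 𝕜 F]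
    [CompleteSpace E] [CompleteSpace F] [l.NeBot] (h : WeakTendsto 𝕜 u l x) (C : E →L[𝕜] F)
    {w : F} (hC : Tendsto (fun i => C (u i)) l (𝓝 w)) : C x = w := by
  refine ext_inner_right 𝕜 fun v => tendsto_nhds_unique ?_ (hC.inner tendsto_const_nhds)
  simpa only [adjoint_inner_right] using h (adjoint C v)

theorem WeakTendsto.tendsto_inner {R : ℝ} (h : WeakTendsto 𝕜 u l x) (hu : ∀ i, ‖u i‖ ≤ R)
    {z : ι → E} {w : E} (hz : Tendsto z l (𝓝 w)) :
    Tendsto (fun i => ⟪u i, z i⟫_𝕜) l (𝓝 ⟪x, w⟫_𝕜) := by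
  have hsmall : Tendsto (fun i => ⟪u i, z i - w⟫_𝕜) l (𝓝 0) := by
    refine squeeze_zero_norm (fun i => (norm_inner_le_norm _ _).trans
      (mul_le_mul_of_nonneg_right (hu i) (norm_nonneg _))) ?_
    simpa using (tendsto_sub_nhds_zero_iff.mpr hz).norm.const_mul R
  simpa [inner_sub_right] using hsmall.add (h w)

end WeakConvergence

theorem IsCompactOperator.exists_tendsto {𝕜 E F : Type*} [NontriviallyNormedField 𝕜]
    [NormedAddCommGroup E] [NormedSpace 𝕜 E] [NormedAddCommGroup F] [NormedSpace 𝕜 F]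
    {C : E →L[𝕜] F} (hC : IsCompactOperator C) {ι : Type*} (U : Ultrafilter ι) {u : ι → E}
    {R : ℝ} (hu : ∀ i, ‖u i‖ ≤ R) : ∃ w : F, Tendsto (fun i => C (u i)) U (𝓝 w) := by
  obtain ⟨S, hS, hCS⟩ := hC.image_closedBall_subset_compact (f := (C : E →ₗ[𝕜] F)) R
  obtain ⟨w, -, hw⟩ := hS.ultrafilter_le_nhds' (U.map fun i => C (u i))
    (Ultrafilter.mem_map.mpr (univ_mem' fun i =>
      hCS ⟨u i, mem_closedBall_zero_iff.mpr (hu i), rfl⟩))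
  exact ⟨w, hw⟩

theorem isCompactOperator_of_finiteDimensional_range {𝕜 E F : Type*} [NontriviallyNormedField 𝕜]
    [LocallyCompactSpace 𝕜] [NormedAddCommGroup E] [NormedSpace 𝕜 E] [NormedAddCommGroup F]
    [NormedSpace 𝕜 F] (T : E →L[𝕜] F) [FiniteDimensional 𝕜 (LinearMap.range (T : E →ₗ[𝕜] F))] :
    IsCompactOperator T := by
  have := FiniteDimensional.proper 𝕜 (LinearMap.range (T : E →ₗ[𝕜] F))
  exact (isCompactOperator_of_locallyCompactSpace_dom
    (T.codRestrict _ (LinearMap.mem_range_self (T : E →ₗ[𝕜] F)))).clm_comp (Submodule.subtypeL _)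

theorem norm_ofReal_smul_sub_sq {𝕜 E : Type*} [RCLike 𝕜] [NormedAddCommGroup E]
    [InnerProductSpace 𝕜 E] (α : ℝ) (z y : E) :
    ‖(α : 𝕜) • z - y‖ ^ 2 = α ^ 2 * ‖z‖ ^ 2 - 2 * α * RCLike.re ⟪z, y⟫_𝕜 + ‖y‖ ^ 2 := by
  rw [norm_sub_sq (𝕜 := 𝕜), norm_smul, inner_smul_left, RCLike.conj_ofReal, RCLike.re_ofReal_mul,
    RCLike.norm_ofReal, mul_pow, sq_abs]
  ring

theorem ContinuousLinearMap.IsPositive.norm_apply_sq_le {E : Type*} [NormedAddCommGroup E]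
    [InnerProductSpace ℂ E] [CompleteSpace E] {K : E →L[ℂ] E} (hK : K.IsPositive) (y : E) :
    ‖K y‖ ^ 2 ≤ ‖K‖ * RCLike.re ⟪y, K y⟫_ℂ := by
  have hK0 : 0 ≤ K := (nonneg_iff_isPositive K).mpr hK
  set s := CFC.sqrt K
  have hss : s * s = K := CFC.sqrt_mul_sqrt_self K
  have hs : IsSelfAdjoint s := (CFC.sqrt_nonneg K).isSelfAdjoint
  have hsK : ‖s‖ ^ 2 = ‖K‖ := by rw [← hss, hs.norm_mul_self]
  have hsy : ‖s y‖ ^ 2 = RCLike.re ⟪y, K y⟫_ℂ := by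
    rw [← hss, ← inner_self_eq_norm_sq (𝕜 := ℂ)]
    exact congrArg RCLike.re (hs.isSymmetric y (s y))
  calc ‖K y‖ ^ 2 = ‖s (s y)‖ ^ 2 := by rw [← hss]; rfl
    _ ≤ (‖s‖ * ‖s y‖) ^ 2 := by gcongr; exact s.le_opNorm _
    _ = ‖K‖ * RCLike.re ⟪y, K y⟫_ℂ := by rw [mul_pow, hsK, hsy]

theorem ContinuousLinearMap.IsPositive.norm_smul_sub_apply_le {E : Type*} [NormedAddCommGroup E]
    [InnerProductSpace ℂ E] [CompleteSpace E] {K : E →L[ℂ] E} (hK : K.IsPositive) {α : ℝ}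
    (hα : ‖K‖ ≤ 2 * α) (y : E) : ‖(α : ℂ) • y - K y‖ ≤ α * ‖y‖ := by
  have hα0 : 0 ≤ α := by linarith [norm_nonneg K]
  have hr : 0 ≤ RCLike.re ⟪y, K y⟫_ℂ := hK.re_inner_nonneg_right y
  refine (sq_le_sq₀ (norm_nonneg _) (by positivity)).mp ?_
  rw [← RCLike.ofReal_eq_complex_ofReal, norm_ofReal_smul_sub_sq, mul_pow]
  linarith [hK.norm_apply_sq_le y, mul_le_mul_of_nonneg_right hα hr]

theorem Submodule.inf_ker_ne_bot_of_not_finiteDimensional {K V W : Type*} [DivisionRing K]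
    [AddCommGroup V] [Module K V] [AddCommGroup W] [Module K W] (f : V →ₗ[K] W)
    [FiniteDimensional K (LinearMap.range f)]
    {M : Submodule K V} (hM : ¬FiniteDimensional K M) : M ⊓ LinearMap.ker f ≠ ⊥ := by
  intro h
  refine hM (Module.Finite.of_injective ((f.domRestrict M).codRestrict (LinearMap.range f)
    fun x => LinearMap.mem_range_self f x) ?_)
  refine (injective_iff_map_eq_zero _).mpr fun x hx => ?_
  have hx' : (x : V) ∈ M ⊓ LinearMap.ker f := ⟨x.2, congrArg Subtype.val hx⟩
  rw [h, Submodule.mem_bot] at hx'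
  exact Subtype.ext hx'

theorem Submodule.exists_mem_norm_eq_one {𝕜 E : Type*} [RCLike 𝕜] [NormedAddCommGroup E]
    [NormedSpace 𝕜 E] {M : Submodule 𝕜 E} (hM : M ≠ ⊥) : ∃ x ∈ M, ‖x‖ = 1 := by
  obtain ⟨x, hxM, hx0⟩ := M.exists_mem_ne_zero_of_ne_bot hM
  exact ⟨_, M.smul_mem _ hxM, norm_smul_inv_norm hx0⟩

section MinimumModulus

variable {H1 H2 : Type*} [NormedAddCommGroup H1] [InnerProductSpace ℂ H1]
  [NormedAddCommGroup H2] [InnerProductSpace ℂ H2] (T : H1 →L[ℂ] H2) {M : Submodule ℂ H1}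

theorem mmodOn_nonneg : 0 ≤ mmodOn T M :=
  Real.sInf_nonneg fun _ ⟨_, _, hx⟩ => hx ▸ norm_nonneg _

theorem mmodOn_le_norm_apply {x : H1} (hx : x ∈ M) (h1 : ‖x‖ = 1) : mmodOn T M ≤ ‖T x‖ :=
  csInf_le ⟨0, fun _ ⟨_, _, hy⟩ => hy ▸ norm_nonneg _⟩ ⟨x, ⟨hx, h1⟩, rfl⟩

theorem mmodOn_mul_norm_le_norm_apply {x : H1} (hx : x ∈ M) : mmodOn T M * ‖x‖ ≤ ‖T x‖ := by
  rcases eq_or_ne x 0 with rfl | h0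
  · simp
  have h := mmodOn_le_norm_apply T (M.smul_mem _ hx) (norm_smul_inv_norm h0)
  rw [map_smul, norm_smul, norm_inv, RCLike.norm_ofReal, abs_norm] at h
  rwa [mul_comm, ← le_inv_mul_iff₀ (norm_pos_iff.mpr h0)]

theorem minAttainsOn_of_norm_apply_le {x : H1} (hx : x ∈ M) (h1 : ‖x‖ = 1)
    (h : ‖T x‖ ≤ mmodOn T M) : MinAttainsOn T M :=
  ⟨x, hx, h1, h.antisymm (mmodOn_le_norm_apply T hx h1)⟩

theorem exists_seq_tendsto_mmodOn (hM : M ≠ ⊥) :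
    ∃ u : ℕ → H1, (∀ n, u n ∈ M) ∧ (∀ n, ‖u n‖ = 1) ∧
      Tendsto (fun n => ‖T (u n)‖) atTop (𝓝 (mmodOn T M)) := by
  obtain ⟨x, hxM, hx1⟩ := M.exists_mem_norm_eq_one hM
  obtain ⟨t, -, ht, htS⟩ := exists_seq_tendsto_sInf (⟨_, x, ⟨hxM, hx1⟩, rfl⟩ :
    ((fun x => ‖T x‖) '' {x : H1 | x ∈ M ∧ ‖x‖ = 1}).Nonempty)
    ⟨0, fun _ ⟨_, _, hy⟩ => hy ▸ norm_nonneg _⟩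
  choose u hu hut using htS
  exact ⟨u, fun n => (hu n).1, fun n => (hu n).2, by simp only [hut]; exact ht⟩

theorem minAttainsOn_of_finiteDimensional [FiniteDimensional ℂ M] (hM : M ≠ ⊥) :
    MinAttainsOn T M := by
  have hsphere : {x : H1 | x ∈ M ∧ ‖x‖ = 1} = Subtype.val '' Metric.sphere (0 : M) 1 := by
    ext x
    simp [and_comm]
  obtain ⟨x, hxM, hx1⟩ := M.exists_mem_norm_eq_one hM
  obtain ⟨y, ⟨hyM, hy1⟩, hy⟩ : mmodOn T M ∈ (fun x => ‖T x‖) '' {x : H1 | x ∈ M ∧ ‖x‖ = 1} :=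
    IsCompact.sInf_mem (hsphere ▸ ((isCompact_sphere 0 1).image continuous_subtype_val).image
      (by fun_prop)) ⟨_, x, ⟨hxM, hx1⟩, rfl⟩
  exact ⟨y, hyM, hy1, hy⟩

end MinimumModulus

theorem minAttainsOn_or_abs_le_mmodOn {H : Type*} [NormedAddCommGroup H] [InnerProductSpace ℂ H]
    [CompleteSpace H] {C : H →L[ℂ] H} (hC : IsCompactOperator C) (α : ℝ) {M : Submodule ℂ H}
    (hM : M ≠ ⊥) (hMc : IsClosed (M : Set H)) :
    MinAttainsOn ((α : ℂ) • 1 - C) M ∨ |α| ≤ mmodOn ((α : ℂ) • 1 - C) M := by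
  set T : H →L[ℂ] H := (α : ℂ) • 1 - C
  set m := mmodOn T M
  have hT : ∀ z, ‖T z‖ ^ 2 = α ^ 2 * ‖z‖ ^ 2 - 2 * α * RCLike.re ⟪z, C z⟫_ℂ + ‖C z‖ ^ 2 :=
    fun z => norm_ofReal_smul_sub_sq α z (C z)
  obtain ⟨u, huM, hu1, hum⟩ := exists_seq_tendsto_mmodOn T hM
  -- Banach–Alaoglu gives weak limits along ultrafilters, so no subsequences are extracted.
  let U := Ultrafilter.of (atTop : Filter ℕ)
  have hUm : Tendsto (fun n => ‖T (u n)‖) U (𝓝 m) := hum.mono_left (Ultrafilter.of_le _)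
  obtain ⟨x, hx1, hux⟩ := exists_weakTendsto_of_norm_le (𝕜 := ℂ) U (fun n => (hu1 n).le)
  obtain ⟨w, hCu⟩ := hC.exists_tendsto U (fun n => (hu1 n).le)
  have hxM : x ∈ M := hux.mem_of_isClosed hMc (.of_forall huM)
  obtain rfl : C x = w := hux.map_eq_of_tendsto C hCu
  have hm : m ^ 2 = ‖T x‖ ^ 2 + α ^ 2 * (1 - ‖x‖ ^ 2) := by
    refine tendsto_nhds_unique (hUm.pow 2) ?_
    have hre := (RCLike.continuous_re.tendsto _).comp
      (hux.tendsto_inner (fun n => (hu1 n).le) hCu)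
    convert (tendsto_const_nhds (x := α ^ 2)).sub (hre.const_mul (2 * α)) |>.add
      (hCu.norm.pow 2) using 1
    · ext n
      simp only [hT, hu1, Function.comp_apply]
      ring
    · rw [hT]
      congr 1
      ring
  have hmx := mmodOn_mul_norm_le_norm_apply T hxM
  have hm0 := mmodOn_nonneg T (M := M)
  rcases hx1.eq_or_lt with hx1 | hx1
  · refine .inl (minAttainsOn_of_norm_apply_le T hxM hx1 ?_)
    refine (sq_le_sq₀ (norm_nonneg _) hm0).mp ?_
    rw [hm, hx1]
    simp
  · refine .inr (abs_le_of_sq_le_sq ?_ hm0)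
    have hsq : (m * ‖x‖) ^ 2 ≤ ‖T x‖ ^ 2 := pow_le_pow_left₀ (by positivity) hmx 2
    have hx1' : ‖x‖ ^ 2 < 1 := by nlinarith [norm_nonneg x]
    nlinarith

theorem stmt15 {H : Type*} [NormedAddCommGroup H] [InnerProductSpace ℂ H]
    [CompleteSpace H] (K F : H →L[ℂ] H) (hK : K.IsPositive)
    (hKc : IsCompactOperator (K : H → H))
    (hFr : FiniteDimensional ℂ (LinearMap.range (F : H →ₗ[ℂ] H))) :
    ∀ α : ℝ, ‖K‖ / 2 ≤ α → AbsMinAttains ((α : ℂ) • (1 : H →L[ℂ] H) - K + F) := by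
  intro α hα M hM hMc
  by_cases hMfin : FiniteDimensional ℂ M
  · exact minAttainsOn_of_finiteDimensional _ hM
  rw [sub_add]
  have hC : IsCompactOperator (K - F) := hKc.sub (isCompactOperator_of_finiteDimensional_range F)
  rcases minAttainsOn_or_abs_le_mmodOn hC α hM hMc with h | hαm
  · exact h
  obtain ⟨y, ⟨hyM, hyF⟩, hy1⟩ :=
    (M ⊓ LinearMap.ker (F : H →ₗ[ℂ] H)).exists_mem_norm_eq_one
      (Submodule.inf_ker_ne_bot_of_not_finiteDimensional _ hMfin)
  have hFy : F y = 0 := hyF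
  refine minAttainsOn_of_norm_apply_le _ hyM hy1 ?_
  calc ‖((α : ℂ) • 1 - (K - F)) y‖ = ‖(α : ℂ) • y - K y‖ := by
        simp [hFy]
    _ ≤ α * ‖y‖ := hK.norm_smul_sub_apply_le (by linarith) y
    _ ≤ _ := by rw [hy1, mul_one]; exact (le_abs_self α).trans hαm
end
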